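/- arXiv:1804.00077 — 8 statements merged into one kernel-verified Lean document; each statement's English description precedes it below -/
import Mathlib

section
/- Let {e_k} be an orthonormal basis of a Hilbert space H and define f_k = e_k + e_{k+1}. Then the linear operator T on span{f_k} with T f_k = f_{k+1} extends to an isometry on H, i.e., ‖T(∑_{k=1}^N c_k f_k)‖ = ‖∑_{k=1}^N c_k f_k‖ for all finite scalar sequences. -/
/-! The Gram matrix `⟪f i, f j⟫` of the `f k` depends only on `i - j` (it is `2`, `1` or `0`
according as `|i - j|` is `0`, `1` or larger), so the shift `f k ↦ f (k + 1)` preserves it and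
hence preserves norms of finite linear combinations. -/

open scoped InnerProductSpace

theorem norm_sum_smul_eq_of_inner_eq {𝕜 E ι : Type*} [RCLike 𝕜] [SeminormedAddCommGroup E]
    [InnerProductSpace 𝕜 E] {g h : ι → E} (hgh : ∀ i j, ⟪g i, g j⟫_𝕜 = ⟪h i, h j⟫_𝕜)
    (s : Finset ι) (c : ι → 𝕜) :
    ‖∑ k ∈ s, c k • g k‖ = ‖∑ k ∈ s, c k • h k‖ := by
  rw [norm_eq_sqrt_re_inner (𝕜 := 𝕜), norm_eq_sqrt_re_inner (𝕜 := 𝕜)]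
  simp only [inner_sum, sum_inner, inner_smul_left, inner_smul_right, hgh]

theorem Orthonormal.inner_add_succ_shift {𝕜 E : Type*} [RCLike 𝕜] [SeminormedAddCommGroup E]
    [InnerProductSpace 𝕜 E] {v : ℕ → E} (hv : Orthonormal 𝕜 v) (i j : ℕ) :
    ⟪v (i + 1) + v (i + 1 + 1), v (j + 1) + v (j + 1 + 1)⟫_𝕜 =
      ⟪v i + v (i + 1), v j + v (j + 1)⟫_𝕜 := by
  simp only [inner_add_left, inner_add_right, orthonormal_iff_ite.mp hv, add_left_inj]

theorem stmt_4_general {H : Type*} [NormedAddCommGroup H] [InnerProductSpace ℂ H]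
    (b : HilbertBasis ℕ ℂ H) (f : ℕ → H) (hf : ∀ k, f k = b k + b (k + 1)) :
    ∀ (N : ℕ) (c : ℕ → ℂ),
      ‖∑ k ∈ Finset.range N, c k • f (k + 1)‖ = ‖∑ k ∈ Finset.range N, c k • f k‖ := by
  intro N c
  refine norm_sum_smul_eq_of_inner_eq (fun i j => ?_) _ c
  simp only [hf, b.orthonormal.inner_add_succ_shift]

/-- For the sequence `f k = e k + e (k+1)` built from an orthonormal basis, the shift
operator `T f_k = f_{k+1}` is isometric on finite linear combinations. -/
theorem stmt_4 {H : Type*} [NormedAddCommGroup H] [InnerProductSpace ℂ H]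
    [CompleteSpace H]
    (b : HilbertBasis ℕ ℂ H) (f : ℕ → H) (hf : ∀ k, f k = b k + b (k + 1)) :
    ∀ (N : ℕ) (c : ℕ → ℂ),
      ‖∑ k ∈ Finset.range N, c k • f (k + 1)‖ = ‖∑ k ∈ Finset.range N, c k • f k‖ :=
  stmt_4_general b f hf
end

section
/- Let {e_k} be a Riesz basis for a Hilbert space H, {m_k} nonzero complex scalars, and f_k = m_k e_k. Let T be the linear operator on span{f_k} with T f_k = f_{k+1}. Then T is bounded if and only if the sequence ‖f_{k+1}‖/‖f_k‖ (equivalently |m_{k+1}|/|m_k|) is bounded. -/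
open Filter Finset Topology

/-!
Write `x = ∑ aₖ fₖ = ∑ (aₖ mₖ) eₖ`, so that `T x = ∑ (aₖ mₖ₊₁) eₖ₊₁`. A bounded ratio
`‖fₖ₊₁‖ ≤ M ‖fₖ‖` together with `A ≤ ‖eₖ‖² ≤ B` gives `|mₖ₊₁|² ≤ (M² B / A) |mₖ|²`, and the two
Riesz inequalities then bound `‖T x‖²` by `(M B / A)² ‖x‖²`. Conversely, testing a bound for `T`
on the single vectors `fₖ` bounds the ratios.
-/

section RieszSequence

variable {𝕜 E : Type*} [NormedField 𝕜] [NormedAddCommGroup E] [NormedSpace 𝕜 E]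
  {e : ℕ → E} {A B : ℝ}

theorem le_sq_norm_of_riesz_lower
    (hlow : ∀ (s : Finset ℕ) (c : ℕ → 𝕜), A * ∑ k ∈ s, ‖c k‖ ^ 2 ≤ ‖∑ k ∈ s, c k • e k‖ ^ 2)
    (k : ℕ) : A ≤ ‖e k‖ ^ 2 := by
  simpa using hlow {k} (fun _ => 1)

theorem sq_norm_le_of_riesz_upper
    (hup : ∀ (s : Finset ℕ) (c : ℕ → 𝕜), ‖∑ k ∈ s, c k • e k‖ ^ 2 ≤ B * ∑ k ∈ s, ‖c k‖ ^ 2)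
    (k : ℕ) : ‖e k‖ ^ 2 ≤ B := by
  simpa using hup {k} (fun _ => 1)

theorem nonneg_of_riesz_upper
    (hup : ∀ (s : Finset ℕ) (c : ℕ → 𝕜), ‖∑ k ∈ s, c k • e k‖ ^ 2 ≤ B * ∑ k ∈ s, ‖c k‖ ^ 2) :
    0 ≤ B :=
  (sq_nonneg _).trans (sq_norm_le_of_riesz_upper hup 0)

theorem riesz_upper_comp_injective
    (hup : ∀ (s : Finset ℕ) (c : ℕ → 𝕜), ‖∑ k ∈ s, c k • e k‖ ^ 2 ≤ B * ∑ k ∈ s, ‖c k‖ ^ 2)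
    {g : ℕ → ℕ} (hg : Function.Injective g) (s : Finset ℕ) (c : ℕ → 𝕜) :
    ‖∑ k ∈ s, c k • e (g k)‖ ^ 2 ≤ B * ∑ k ∈ s, ‖c k‖ ^ 2 := by
  simpa only [Finset.sum_map, Function.Embedding.coeFn_mk, hg.extend_apply] using
    hup (s.map ⟨g, hg⟩) (Function.extend g c 0)

theorem sq_norm_sum_smul_succ_le (hA : 0 < A)
    (hlow : ∀ (s : Finset ℕ) (c : ℕ → 𝕜), A * ∑ k ∈ s, ‖c k‖ ^ 2 ≤ ‖∑ k ∈ s, c k • e k‖ ^ 2)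
    (hup : ∀ (s : Finset ℕ) (c : ℕ → 𝕜), ‖∑ k ∈ s, c k • e k‖ ^ 2 ≤ B * ∑ k ∈ s, ‖c k‖ ^ 2)
    {m : ℕ → 𝕜} {K : ℝ} (hK : 0 ≤ K) (hm : ∀ k, ‖m (k + 1)‖ ^ 2 ≤ K * ‖m k‖ ^ 2)
    (s : Finset ℕ) (a : ℕ → 𝕜) :
    ‖∑ k ∈ s, a k • (m (k + 1) • e (k + 1))‖ ^ 2 ≤
      B * K / A * ‖∑ k ∈ s, a k • (m k • e k)‖ ^ 2 := by
  have hB := nonneg_of_riesz_upper hup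
  have hweights : ∑ k ∈ s, ‖a k * m (k + 1)‖ ^ 2 ≤ K * ∑ k ∈ s, ‖a k * m k‖ ^ 2 := by
    rw [Finset.mul_sum]
    gcongr with k
    rw [norm_mul, norm_mul, mul_pow, mul_pow, mul_left_comm]
    exact mul_le_mul_of_nonneg_left (hm k) (sq_nonneg _)
  simp only [smul_smul]
  calc ‖∑ k ∈ s, (a k * m (k + 1)) • e (k + 1)‖ ^ 2
      ≤ B * ∑ k ∈ s, ‖a k * m (k + 1)‖ ^ 2 :=
        riesz_upper_comp_injective hup Nat.succ_injective s _
    _ ≤ B * (K * ∑ k ∈ s, ‖a k * m k‖ ^ 2) := mul_le_mul_of_nonneg_left hweights hB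
    _ = B * K / A * (A * ∑ k ∈ s, ‖a k * m k‖ ^ 2) := by field_simp
    _ ≤ B * K / A * ‖∑ k ∈ s, (a k * m k) • e k‖ ^ 2 := by
        gcongr
        exact hlow s _

end RieszSequence

theorem sq_norm_smul_le_of_norm_smul_le {𝕜 E : Type*} [NormedField 𝕜] [NormedAddCommGroup E]
    [NormedSpace 𝕜 E] {u v : E} {a b : 𝕜} {A B M : ℝ} (hA : 0 < A)
    (hu : A ≤ ‖u‖ ^ 2) (hv : ‖v‖ ^ 2 ≤ B) (h : ‖a • u‖ ≤ M * ‖b • v‖) :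
    ‖a‖ ^ 2 ≤ M ^ 2 * B / A * ‖b‖ ^ 2 := by
  have hsq : ‖a‖ ^ 2 * ‖u‖ ^ 2 ≤ M ^ 2 * (‖b‖ ^ 2 * ‖v‖ ^ 2) := by
    simpa only [norm_smul, mul_pow] using pow_le_pow_left₀ (norm_nonneg _) h 2
  rw [div_mul_eq_mul_div, le_div_iff₀ hA]
  calc ‖a‖ ^ 2 * A ≤ ‖a‖ ^ 2 * ‖u‖ ^ 2 := by gcongr
    _ ≤ M ^ 2 * (‖b‖ ^ 2 * ‖v‖ ^ 2) := hsq
    _ ≤ M ^ 2 * B * ‖b‖ ^ 2 := by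
        rw [mul_assoc, mul_comm B]
        gcongr

theorem LinearMap.norm_apply_le_of_mem_span_range {𝕜 E : Type*} [NormedField 𝕜]
    [NormedAddCommGroup E] [NormedSpace 𝕜 E] {T : E →ₗ[𝕜] E} {f : ℕ → E} {D : ℝ}
    (hT : ∀ k, T (f k) = f (k + 1))
    (h : ∀ (s : Finset ℕ) (a : ℕ → 𝕜),
      ‖∑ k ∈ s, a k • f (k + 1)‖ ^ 2 ≤ D * ‖∑ k ∈ s, a k • f k‖ ^ 2)
    {x : E} (hx : x ∈ Submodule.span 𝕜 (Set.range f)) : ‖T x‖ ≤ √D * ‖x‖ := by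
  obtain ⟨c, rfl⟩ := Finsupp.mem_span_range_iff_exists_finsupp.mp hx
  have hTx : T (c.sum fun k a => a • f k) = ∑ k ∈ c.support, c k • f (k + 1) := by
    simp only [Finsupp.sum, map_sum, map_smul, hT]
  rw [hTx, Finsupp.sum]
  calc ‖∑ k ∈ c.support, c k • f (k + 1)‖
      = √(‖∑ k ∈ c.support, c k • f (k + 1)‖ ^ 2) := (Real.sqrt_sq (norm_nonneg _)).symm
    _ ≤ √(D * ‖∑ k ∈ c.support, c k • f k‖ ^ 2) := Real.sqrt_le_sqrt (h _ _)
    _ = √D * ‖∑ k ∈ c.support, c k • f k‖ := by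
        rw [Real.sqrt_mul' _ (sq_nonneg _), Real.sqrt_sq (norm_nonneg _)]

theorem stmt_8_general {H : Type*} [NormedAddCommGroup H] [InnerProductSpace ℂ H]
    (e : ℕ → H) (A B : ℝ) (hA : 0 < A)
    (hRiesz : ∀ (s : Finset ℕ) (c : ℕ → ℂ),
      A * ∑ k ∈ s, ‖c k‖ ^ 2 ≤ ‖∑ k ∈ s, c k • e k‖ ^ 2 ∧
      ‖∑ k ∈ s, c k • e k‖ ^ 2 ≤ B * ∑ k ∈ s, ‖c k‖ ^ 2)
    (m : ℕ → ℂ) (hm : ∀ k, m k ≠ 0) (f : ℕ → H) (hf : ∀ k, f k = m k • e k)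
    (T : H →ₗ[ℂ] H) (hT : ∀ k, T (f k) = f (k + 1)) :
    (∃ C : ℝ, ∀ x ∈ Submodule.span ℂ (Set.range f), ‖T x‖ ≤ C * ‖x‖) ↔
      (∃ M : ℝ, ∀ k, ‖f (k + 1)‖ / ‖f k‖ ≤ M) := by
  obtain rfl : f = fun k => m k • e k := funext hf
  have hlow := fun s c => (hRiesz s c).1
  have hup := fun s c => (hRiesz s c).2
  have hf_pos (k : ℕ) : 0 < ‖m k • e k‖ := by
    refine norm_pos_iff.mpr (smul_ne_zero (hm k) fun he => ?_)
    have := le_sq_norm_of_riesz_lower hlow k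
    simp only [he, norm_zero] at this
    linarith
  constructor
  · rintro ⟨C, hC⟩
    refine ⟨C, fun k => (div_le_iff₀ (hf_pos k)).mpr ?_⟩
    simpa only [hT] using hC _ (Submodule.subset_span ⟨k, rfl⟩)
  · rintro ⟨M, hM⟩
    have hratio (k : ℕ) : ‖m (k + 1)‖ ^ 2 ≤ M ^ 2 * B / A * ‖m k‖ ^ 2 :=
      sq_norm_smul_le_of_norm_smul_le hA (le_sq_norm_of_riesz_lower hlow _)
        (sq_norm_le_of_riesz_upper hup _) ((div_le_iff₀ (hf_pos k)).mp (hM k))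
    have hK : 0 ≤ M ^ 2 * B / A := by
      have := nonneg_of_riesz_upper hup
      positivity
    exact ⟨_, fun x hx => LinearMap.norm_apply_le_of_mem_span_range hT
      (sq_norm_sum_smul_succ_le hA hlow hup hK hratio) hx⟩

/-- Let `{e k}` be a Riesz basis (bounds `A, B` and dense span), `m k` nonzero scalars,
`f k = m k • e k`, and `T` the operator with `T f_k = f_{k+1}`. Then `T` is bounded on
`span {f k}` iff the ratios `‖f (k+1)‖ / ‖f k‖` are bounded. -/
theorem stmt_8 {H : Type*} [NormedAddCommGroup H] [InnerProductSpace ℂ H]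
    [CompleteSpace H] [TopologicalSpace.SeparableSpace H]
    (e : ℕ → H) (A B : ℝ) (hA : 0 < A) (hB : 0 < B)
    (hRiesz : ∀ (s : Finset ℕ) (c : ℕ → ℂ),
      A * ∑ k ∈ s, ‖c k‖ ^ 2 ≤ ‖∑ k ∈ s, c k • e k‖ ^ 2 ∧
      ‖∑ k ∈ s, c k • e k‖ ^ 2 ≤ B * ∑ k ∈ s, ‖c k‖ ^ 2)
    (hdense : (Submodule.span ℂ (Set.range e)).topologicalClosure = ⊤)
    (m : ℕ → ℂ) (hm : ∀ k, m k ≠ 0) (f : ℕ → H) (hf : ∀ k, f k = m k • e k)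
    (T : H →ₗ[ℂ] H) (hT : ∀ k, T (f k) = f (k + 1)) :
    (∃ C : ℝ, ∀ x ∈ Submodule.span ℂ (Set.range f), ‖T x‖ ≤ C * ‖x‖) ↔
      (∃ M : ℝ, ∀ k, ‖f (k + 1)‖ / ‖f k‖ ≤ M) :=
  stmt_8_general e A B hA hRiesz m hm f hf T hT
end

section
/- Let {λ_k} ⊂ 𝔻 be a sequence of distinct points such that (1 − |λ_{k+1}|)/(1 − |λ_k|) ≤ c for all k, where 0 < c < 1. Then {λ_k} satisfies the Carleson condition: inf_n ∏_{k≠n} |λ_k − λ_n|/|1 − conj(λ_k) λ_n| > 0. -/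
/-!
Iterating the ratio condition gives `1 - |λ (n + j)| ≤ c ^ j (1 - |λ n|)`. The pseudo-hyperbolic
distance dominates that of the moduli, so `ρ(λ (n + j), λ n) ≥ (1 - c ^ j) / (1 + c ^ j)`, which
is at least `exp (-2 c ^ j / (1 - c))`. Hence the product over `k ≠ n` is at least
`exp (-(2 / (1 - c)) ∑_{j ≠ 0} c ^ |j|) = exp (-4 c / (1 - c) ^ 2)`.
-/

open Finset Real

noncomputable def pseudoHypDist (z w : ℂ) : ℝ := ‖z - w‖ / ‖1 - starRingEnd ℂ z * w‖

theorem pseudoHypDist_comm (z w : ℂ) : pseudoHypDist z w = pseudoHypDist w z := by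
  have hconj : 1 - starRingEnd ℂ w * z = starRingEnd ℂ (1 - starRingEnd ℂ z * w) := by
    simp [mul_comm]
  rw [pseudoHypDist, pseudoHypDist, hconj, RCLike.norm_conj, norm_sub_rev]

theorem norm_one_sub_conj_mul_sq_sub_norm_sub_sq (z w : ℂ) :
    ‖1 - starRingEnd ℂ z * w‖ ^ 2 - ‖z - w‖ ^ 2 = (1 - ‖z‖ ^ 2) * (1 - ‖w‖ ^ 2) := by
  simp only [Complex.sq_norm, Complex.normSq_apply, Complex.sub_re, Complex.sub_im,
    Complex.mul_re, Complex.mul_im, Complex.one_re, Complex.one_im, Complex.conj_re,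
    Complex.conj_im]
  ring

theorem one_sub_norm_mul_norm_le_norm_one_sub_conj_mul (z w : ℂ) :
    1 - ‖z‖ * ‖w‖ ≤ ‖1 - starRingEnd ℂ z * w‖ := by
  simpa [norm_mul, RCLike.norm_conj] using norm_sub_norm_le (1 : ℂ) (starRingEnd ℂ z * w)

theorem sub_div_one_sub_mul_le_pseudoHypDist {z w : ℂ} (hz : ‖z‖ < 1) (hw : ‖w‖ < 1) :
    (‖z‖ - ‖w‖) / (1 - ‖z‖ * ‖w‖) ≤ pseudoHypDist z w := by
  have hD := one_sub_norm_mul_norm_le_norm_one_sub_conj_mul z w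
  have hid := norm_one_sub_conj_mul_sq_sub_norm_sub_sq z w
  set r := ‖z‖
  set s := ‖w‖
  set D := ‖1 - starRingEnd ℂ z * w‖
  have hr : 0 ≤ r := norm_nonneg z
  have hs : 0 ≤ s := norm_nonneg w
  have hrs : 0 < 1 - r * s := by nlinarith
  have hρ : 0 ≤ pseudoHypDist z w := by unfold pseudoHypDist; positivity
  rcases le_total r s with hle | hle
  · exact (div_nonpos_of_nonpos_of_nonneg (by linarith) hrs.le).trans hρ
  rw [pseudoHypDist, div_le_div_iff₀ hrs (hrs.trans_le hD)]
  -- compare squares, using `D² - d² = (1-r²)(1-s²) = (1-rs)² - (r-s)²`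
  have hP : 0 ≤ (1 - r ^ 2) * (1 - s ^ 2) := mul_nonneg (by nlinarith) (by nlinarith)
  have hD2 : (1 - r * s) ^ 2 ≤ D ^ 2 := pow_le_pow_left₀ hrs.le hD 2
  refine (pow_le_pow_iff_left₀ (mul_nonneg (by linarith) (hrs.le.trans hD)) (by positivity)
    two_ne_zero).mp ?_
  nlinarith [mul_nonneg hP (sub_nonneg.2 hD2)]

theorem one_sub_div_one_add_le_sub_div_one_sub_mul {a b t : ℝ} (ha : a < 1) (hb0 : 0 ≤ b)
    (hb1 : b < 1) (ht0 : 0 ≤ t) (ht1 : t ≤ 1) (hab : 1 - a ≤ t * (1 - b)) :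
    (1 - t) / (1 + t) ≤ (a - b) / (1 - a * b) := by
  have ha0 : 0 ≤ a := by nlinarith
  rw [div_le_div_iff₀ (by linarith) (by nlinarith)]
  nlinarith [mul_nonneg (mul_nonneg (sub_nonneg.2 ha.le) (sub_nonneg.2 hb1.le))
    (sub_nonneg.2 ht1)]

theorem exp_neg_mul_le_one_sub_div_one_add {t c : ℝ} (ht : 0 ≤ t) (htc : t ≤ c) (hc : c < 1) :
    exp (-(2 / (1 - c) * t)) ≤ (1 - t) / (1 + t) := by
  have h1c : 0 < 1 - c := by linarith
  have h1t : 0 < 1 - t := by linarith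
  have hle : (1 + t) / (1 - t) ≤ exp (2 / (1 - c) * t) :=
    calc (1 + t) / (1 - t) = 2 * t / (1 - t) + 1 := by field_simp; ring
      _ ≤ 2 / (1 - c) * t + 1 := by
        rw [div_mul_eq_mul_div, mul_comm 2 t]; gcongr
      _ ≤ exp (2 / (1 - c) * t) := add_one_le_exp _
  rw [exp_neg]
  exact (inv_anti₀ (by positivity) hle).trans_eq (inv_div _ _)

theorem sum_pow_succ_le_of_injOn {ι : Type*} {s : Finset ι} {f : ι → ℕ} (hf : Set.InjOn f s)
    {c : ℝ} (hc0 : 0 ≤ c) (hc1 : c < 1) : ∑ k ∈ s, c ^ (f k + 1) ≤ c / (1 - c) :=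
  calc ∑ k ∈ s, c ^ (f k + 1) = c * ∑ j ∈ s.image f, c ^ j := by
        rw [sum_image hf, mul_sum]; simp only [pow_succ, mul_comm]
    _ ≤ c * ∑' j, c ^ j := by
        gcongr
        exact (summable_geometric_of_lt_one hc0 hc1).sum_le_tsum _ fun j _ => pow_nonneg hc0 j
    _ = c / (1 - c) := by rw [tsum_geometric_of_lt_one hc0 hc1, div_eq_mul_inv]

theorem sum_pow_dist_le {c : ℝ} (hc0 : 0 ≤ c) (hc1 : c < 1) {n : ℕ} {s : Finset ℕ} (hn : n ∉ s) :
    ∑ k ∈ s, c ^ Nat.dist k n ≤ 2 * (c / (1 - c)) := by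
  rw [← sum_filter_add_sum_filter_not s (· < n), two_mul]
  gcongr
  · calc ∑ k ∈ s with k < n, c ^ Nat.dist k n = ∑ k ∈ s with k < n, c ^ (n - k - 1 + 1) :=
          sum_congr rfl fun k hk => by
            rw [mem_filter] at hk; rw [Nat.dist_eq_sub_of_le hk.2.le]; congr 1; omega
      _ ≤ c / (1 - c) := sum_pow_succ_le_of_injOn
          (fun x hx y hy h => by simp only [coe_filter, Set.mem_ofPred_eq] at hx hy h; omega) hc0 hc1
  · calc ∑ k ∈ s with ¬k < n, c ^ Nat.dist k n = ∑ k ∈ s with ¬k < n, c ^ (k - n - 1 + 1) :=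
          sum_congr rfl fun k hk => by
            rw [mem_filter] at hk
            have : k ≠ n := fun h => hn (h ▸ hk.1)
            rw [Nat.dist_eq_sub_of_le_right (not_lt.1 hk.2)]; congr 1; omega
      _ ≤ c / (1 - c) := sum_pow_succ_le_of_injOn
          (fun x hx y hy h => by
            simp only [coe_filter, Set.mem_ofPred_eq] at hx hy h
            have : x ≠ n := fun h => hn (h ▸ hx.1)
            have : y ≠ n := fun h => hn (h ▸ hy.1)
            omega) hc0 hc1

theorem one_sub_norm_add_le_pow_mul {l : ℕ → ℂ} {c : ℝ} (hd : ∀ k, ‖l k‖ < 1) (hc0 : 0 ≤ c)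
    (hratio : ∀ k, (1 - ‖l (k + 1)‖) / (1 - ‖l k‖) ≤ c) (m j : ℕ) :
    1 - ‖l (m + j)‖ ≤ c ^ j * (1 - ‖l m‖) :=
  le_geom (u := fun j => 1 - ‖l (m + j)‖) hc0 j fun k _ =>
    (div_le_iff₀ (sub_pos.2 (hd (m + k)))).1 (hratio (m + k))

theorem exp_neg_mul_pow_dist_le_pseudoHypDist {l : ℕ → ℂ} {c : ℝ} (hd : ∀ k, ‖l k‖ < 1)
    (hc0 : 0 ≤ c) (hc1 : c < 1) (hratio : ∀ k, (1 - ‖l (k + 1)‖) / (1 - ‖l k‖) ≤ c)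
    {k n : ℕ} (hkn : k ≠ n) :
    exp (-(2 / (1 - c) * c ^ Nat.dist k n)) ≤ pseudoHypDist (l k) (l n) := by
  wlog hlt : n < k generalizing k n
  · rw [Nat.dist_comm, pseudoHypDist_comm]
    exact this hkn.symm (hkn.lt_or_gt.resolve_right hlt)
  have hk : k = n + Nat.dist k n := by rw [Nat.dist_eq_sub_of_le_right hlt.le]; omega
  set j := Nat.dist k n
  have hj : c ^ j ≤ c := pow_le_of_le_one hc0 hc1.le (Nat.dist_pos_of_ne hkn).ne'
  calc exp (-(2 / (1 - c) * c ^ j)) ≤ (1 - c ^ j) / (1 + c ^ j) :=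
        exp_neg_mul_le_one_sub_div_one_add (pow_nonneg hc0 j) hj hc1
    _ ≤ (‖l k‖ - ‖l n‖) / (1 - ‖l k‖ * ‖l n‖) :=
        one_sub_div_one_add_le_sub_div_one_sub_mul (hd k) (norm_nonneg _) (hd n)
          (pow_nonneg hc0 j) (hj.trans hc1.le)
          (hk ▸ one_sub_norm_add_le_pow_mul hd hc0 hratio n j)
    _ ≤ pseudoHypDist (l k) (l n) := sub_div_one_sub_mul_le_pseudoHypDist (hd k) (hd n)

theorem stmt_11_general (l : ℕ → ℂ) (hd : ∀ k, ‖l k‖ < 1)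
    (c : ℝ) (hc0 : 0 < c) (hc1 : c < 1)
    (hratio : ∀ k, (1 - ‖l (k + 1)‖) / (1 - ‖l k‖) ≤ c) :
    ∃ δ : ℝ, 0 < δ ∧ ∀ (n : ℕ) (s : Finset ℕ), n ∉ s →
      δ ≤ ∏ k ∈ s, ‖l k - l n‖ / ‖1 - (starRingEnd ℂ) (l k) * l n‖ := by
  refine ⟨exp (-(2 / (1 - c) * (2 * (c / (1 - c))))), exp_pos _, fun n s hns => ?_⟩
  calc exp (-(2 / (1 - c) * (2 * (c / (1 - c)))))
      ≤ exp (∑ k ∈ s, -(2 / (1 - c) * c ^ Nat.dist k n)) := by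
        rw [sum_neg_distrib, ← mul_sum, exp_le_exp, neg_le_neg_iff]
        gcongr
        exact sum_pow_dist_le hc0.le hc1 hns
    _ = ∏ k ∈ s, exp (-(2 / (1 - c) * c ^ Nat.dist k n)) := exp_sum _ _
    _ ≤ ∏ k ∈ s, pseudoHypDist (l k) (l n) :=
        prod_le_prod (fun _ _ => (exp_pos _).le) fun k hk =>
          exp_neg_mul_pow_dist_le_pseudoHypDist hd hc0.le hc1 hratio fun h => hns (h ▸ hk)

/-- If `{λ k} ⊂ 𝔻` are pairwise distinct and `(1 - |λ (k+1)|)/(1 - |λ k|) ≤ c < 1`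
for all `k`, then `{λ k}` satisfies the Carleson condition. -/
theorem stmt_11 (l : ℕ → ℂ) (hd : ∀ k, ‖l k‖ < 1)
    (hdist : Function.Injective l)
    (c : ℝ) (hc0 : 0 < c) (hc1 : c < 1)
    (hratio : ∀ k, (1 - ‖l (k + 1)‖) / (1 - ‖l k‖) ≤ c) :
    ∃ δ : ℝ, 0 < δ ∧ ∀ (n : ℕ) (s : Finset ℕ), n ∉ s →
      δ ≤ ∏ k ∈ s, ‖l k - l n‖ / ‖1 - (starRingEnd ℂ) (l k) * l n‖ :=
  stmt_11_general l hd c hc0 hc1 hratio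
end

section
/- For all x, y ∈ (0,1) and ℓ ∈ ℕ, ℓ ≥ 1, the pseudo-hyperbolic distance does not decrease under taking ℓ-th roots: (x^{1/ℓ} − y^{1/ℓ})/(1 − x^{1/ℓ} y^{1/ℓ}) ≥ (x − y)/(1 − x y) when x ≥ y. -/
open Real Finset

private lemma pair_ineq (a b : ℝ) (ha0 : 0 ≤ a) (ha1 : a ≤ 1) (hb0 : 0 ≤ b) (hb1 : b ≤ 1)
    (i j : ℕ) : a ^ i * b ^ j + a ^ j * b ^ i ≤ a ^ i * b ^ i + a ^ j * b ^ j := by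
  rcases le_total i j with h | h
  · have h1 : a ^ j ≤ a ^ i := pow_le_pow_of_le_one ha0 ha1 h
    have h2 : b ^ j ≤ b ^ i := pow_le_pow_of_le_one hb0 hb1 h
    nlinarith [mul_nonneg (sub_nonneg.2 h1) (sub_nonneg.2 h2)]
  · have h1 : a ^ i ≤ a ^ j := pow_le_pow_of_le_one ha0 ha1 h
    have h2 : b ^ i ≤ b ^ j := pow_le_pow_of_le_one hb0 hb1 h
    nlinarith [mul_nonneg (sub_nonneg.2 h1) (sub_nonneg.2 h2)]

private lemma sum_ineq (a b : ℝ) (ha0 : 0 ≤ a) (ha1 : a ≤ 1) (hb0 : 0 ≤ b) (hb1 : b ≤ 1)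
    (ℓ : ℕ) :
    ∑ i ∈ range ℓ, a ^ i * b ^ (ℓ - 1 - i) ≤ ∑ i ∈ range ℓ, (a * b) ^ i := by
  have hrefl : ∑ i ∈ range ℓ, a ^ (ℓ - 1 - i) * b ^ i
      = ∑ i ∈ range ℓ, a ^ i * b ^ (ℓ - 1 - i) := by
    rw [← Finset.sum_range_reflect (fun i => a ^ (ℓ - 1 - i) * b ^ i) ℓ]
    apply Finset.sum_congr rfl
    intro i hi
    simp only [Finset.mem_range] at hi
    have : ℓ - 1 - (ℓ - 1 - i) = i := by omega
    rw [this]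
  have hrefl2 : ∑ i ∈ range ℓ, (a * b) ^ (ℓ - 1 - i) = ∑ i ∈ range ℓ, (a * b) ^ i :=
    Finset.sum_range_reflect (fun i => (a * b) ^ i) ℓ
  have key : ∑ i ∈ range ℓ, (a ^ i * b ^ (ℓ - 1 - i) + a ^ (ℓ - 1 - i) * b ^ i)
      ≤ ∑ i ∈ range ℓ, ((a * b) ^ i + (a * b) ^ (ℓ - 1 - i)) := by
    apply Finset.sum_le_sum
    intro i _
    rw [mul_pow, mul_pow]
    exact pair_ineq a b ha0 ha1 hb0 hb1 i (ℓ - 1 - i)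
  rw [Finset.sum_add_distrib, Finset.sum_add_distrib, hrefl, hrefl2] at key
  linarith

private lemma frac_ineq (a b : ℝ) (ha0 : 0 < a) (ha1 : a < 1) (hb0 : 0 < b) (hb1 : b < 1)
    (hba : b ≤ a) (ℓ : ℕ) (hℓ : 1 ≤ ℓ) :
    (a ^ ℓ - b ^ ℓ) / (1 - a ^ ℓ * b ^ ℓ) ≤ (a - b) / (1 - a * b) := by
  have hab1 : a * b < 1 := by nlinarith
  have habℓ : (a * b) ^ ℓ < 1 := pow_lt_one₀ (by positivity) hab1 (by omega)
  have hpos2 : (0:ℝ) < 1 - a * b := by linarith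
  have hpos1 : (0:ℝ) < 1 - a ^ ℓ * b ^ ℓ := by rw [← mul_pow]; linarith
  rw [div_le_div_iff₀ hpos1 hpos2]
  have hS : (∑ i ∈ range ℓ, a ^ i * b ^ (ℓ - 1 - i)) * (a - b) = a ^ ℓ - b ^ ℓ :=
    geom_sum₂_mul a b ℓ
  have hT : 1 - (a * b) ^ ℓ = (∑ i ∈ range ℓ, (a * b) ^ i) * (1 - a * b) := by
    linear_combination geom_sum_mul (a * b) ℓ
  have hS' : a ^ ℓ * b ^ ℓ = (a * b) ^ ℓ := (mul_pow a b ℓ).symm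
  rw [← hS, hS', hT]
  have hsum := sum_ineq a b ha0.le ha1.le hb0.le hb1.le ℓ
  calc (∑ i ∈ range ℓ, a ^ i * b ^ (ℓ - 1 - i)) * (a - b) * (1 - a * b)
      = (∑ i ∈ range ℓ, a ^ i * b ^ (ℓ - 1 - i)) * ((a - b) * (1 - a * b)) := by ring
    _ ≤ (∑ i ∈ range ℓ, (a * b) ^ i) * ((a - b) * (1 - a * b)) := by
        apply mul_le_mul_of_nonneg_right hsum
        have : 0 ≤ a - b := by linarith
        positivity
    _ = (a - b) * ((∑ i ∈ range ℓ, (a * b) ^ i) * (1 - a * b)) := by ring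

/-- For `0 < y ≤ x < 1` and a positive integer `ℓ`, the pseudo-hyperbolic distance does
not decrease when passing to `ℓ`-th roots:
`(x^{1/ℓ} - y^{1/ℓ})/(1 - x^{1/ℓ} y^{1/ℓ}) ≥ (x - y)/(1 - x y)`. -/
theorem stmt_14 (x y : ℝ) (hx0 : 0 < x) (hx1 : x < 1) (hy0 : 0 < y) (hy1 : y < 1)
    (hxy : y ≤ x) (ℓ : ℕ) (hℓ : 1 ≤ ℓ) :
    (x - y) / (1 - x * y) ≤
      (x ^ ((ℓ : ℝ)⁻¹) - y ^ ((ℓ : ℝ)⁻¹)) / (1 - x ^ ((ℓ : ℝ)⁻¹) * y ^ ((ℓ : ℝ)⁻¹)) := by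
  set a := x ^ ((ℓ : ℝ)⁻¹) with hadef
  set b := y ^ ((ℓ : ℝ)⁻¹) with hbdef
  have hℓ0 : ℓ ≠ 0 := by omega
  have hinv : (0:ℝ) < (ℓ : ℝ)⁻¹ := by positivity
  have ha : a ^ ℓ = x := Real.rpow_inv_natCast_pow hx0.le hℓ0
  have hb : b ^ ℓ = y := Real.rpow_inv_natCast_pow hy0.le hℓ0
  have ha0 : 0 < a := Real.rpow_pos_of_pos hx0 _
  have hb0 : 0 < b := Real.rpow_pos_of_pos hy0 _
  have ha1 : a < 1 := Real.rpow_lt_one hx0.le hx1 hinv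
  have hb1 : b < 1 := Real.rpow_lt_one hy0.le hy1 hinv
  have hba : b ≤ a := Real.rpow_le_rpow hy0.le hxy hinv.le
  calc (x - y) / (1 - x * y) = (a ^ ℓ - b ^ ℓ) / (1 - a ^ ℓ * b ^ ℓ) := by rw [ha, hb]
    _ ≤ (a - b) / (1 - a * b) := frac_ineq a b ha0 ha1 hb0 hb1 hba ℓ hℓ
end

section
/- If {λ_k} ⊂ [0,1) satisfies the Carleson condition, then for every ℓ ∈ ℕ the sequence {λ_k^{1/ℓ}} also satisfies the Carleson condition. -/
open Filter Finset Topology Real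

lemma aux_sum (n : ℕ) (a b : ℝ) (ha : 0 ≤ a) (ha1 : a ≤ 1) (hb : 0 ≤ b) (hb1 : b ≤ 1) :
    ∑ i ∈ Finset.range n, a ^ i * b ^ (n - 1 - i) ≤ ∑ i ∈ Finset.range n, (a * b) ^ i := by
  have key : ∀ i ∈ Finset.range n,
      a ^ i * b ^ (n - 1 - i) + a ^ (n - 1 - i) * b ^ i
        ≤ (a * b) ^ i + (a * b) ^ (n - 1 - i) := by
    intro i _
    set j := n - 1 - i with hj
    rw [mul_pow, mul_pow]
    rcases le_total i j with h | h
    · have h1 : a ^ j ≤ a ^ i := pow_le_pow_of_le_one ha ha1 h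
      have h2 : b ^ j ≤ b ^ i := pow_le_pow_of_le_one hb hb1 h
      nlinarith [mul_nonneg (sub_nonneg.2 h1) (sub_nonneg.2 h2)]
    · have h1 : a ^ i ≤ a ^ j := pow_le_pow_of_le_one ha ha1 h
      have h2 : b ^ i ≤ b ^ j := pow_le_pow_of_le_one hb hb1 h
      nlinarith [mul_nonneg (sub_nonneg.2 h1) (sub_nonneg.2 h2)]
  have hSrefl : ∑ i ∈ Finset.range n, a ^ (n - 1 - i) * b ^ i
      = ∑ i ∈ Finset.range n, a ^ i * b ^ (n - 1 - i) := by
    rw [← Finset.sum_range_reflect (fun i => a ^ i * b ^ (n - 1 - i)) n]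
    refine Finset.sum_congr rfl fun i hi => ?_
    have hin : i < n := Finset.mem_range.1 hi
    have : n - 1 - (n - 1 - i) = i := Nat.sub_sub_self (Nat.le_sub_one_of_lt hin)
    rw [this]
  have hTrefl : ∑ i ∈ Finset.range n, (a * b) ^ (n - 1 - i)
      = ∑ i ∈ Finset.range n, (a * b) ^ i :=
    Finset.sum_range_reflect (fun i => (a * b) ^ i) n
  have hsum := Finset.sum_le_sum key
  rw [Finset.sum_add_distrib, Finset.sum_add_distrib, hSrefl, hTrefl] at hsum
  linarith

lemma aux_pow' (n : ℕ) (a b : ℝ) (ha : 0 ≤ a) (ha1 : a < 1) (hb : 0 ≤ b) (hb1 : b < 1)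
    (hba : b ≤ a) :
    |a ^ n - b ^ n| / (1 - a ^ n * b ^ n) ≤ |a - b| / (1 - a * b) := by
  rcases Nat.eq_zero_or_pos n with rfl | hn
  · simp only [pow_zero, sub_self, abs_zero, one_mul, zero_div]
    exact div_nonneg (abs_nonneg _) (by nlinarith)
  have hab : a * b < 1 := by nlinarith
  have hab0 : 0 ≤ a * b := mul_nonneg ha hb
  have habn1 : a ^ n * b ^ n < 1 := by
    rw [← mul_pow]
    exact pow_lt_one₀ hab0 hab hn.ne'
  have hban : b ^ n ≤ a ^ n := pow_le_pow_left₀ hb hba n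
  rw [abs_of_nonneg (sub_nonneg.2 hban), abs_of_nonneg (sub_nonneg.2 hba)]
  rw [div_le_div_iff₀ (by linarith) (by linarith)]
  set S := ∑ i ∈ Finset.range n, a ^ i * b ^ (n - 1 - i) with hS
  set T := ∑ i ∈ Finset.range n, (a * b) ^ i with hT
  have hST : S ≤ T := aux_sum n a b ha ha1.le hb hb1.le
  have hS0 : 0 ≤ S := Finset.sum_nonneg fun i _ =>
    mul_nonneg (pow_nonneg ha i) (pow_nonneg hb _)
  have e1 : a ^ n - b ^ n = S * (a - b) := (geom_sum₂_mul a b n).symm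
  have e2 : 1 - a ^ n * b ^ n = T * (1 - a * b) := by
    have := geom_sum_mul (a * b) n
    rw [← mul_pow]
    nlinarith [this]
  rw [e1, e2]
  nlinarith [mul_nonneg (sub_nonneg.2 hba)
    (mul_nonneg (sub_nonneg.2 hST) (by linarith : (0:ℝ) ≤ 1 - a * b))]

lemma aux_pow (n : ℕ) (a b : ℝ) (ha : 0 ≤ a) (ha1 : a < 1) (hb : 0 ≤ b) (hb1 : b < 1) :
    |a ^ n - b ^ n| / (1 - a ^ n * b ^ n) ≤ |a - b| / (1 - a * b) := by
  rcases le_total b a with h | h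
  · exact aux_pow' n a b ha ha1 hb hb1 h
  · have := aux_pow' n b a hb hb1 ha ha1 h
    rwa [abs_sub_comm (b ^ n), abs_sub_comm b a, mul_comm (b ^ n), mul_comm b a] at this

/-- If `{λ k} ⊂ [0,1)` satisfies the Carleson condition, then for every `ℓ ≥ 1` the
sequence of `ℓ`-th roots `{λ k ^ (1/ℓ)}` also satisfies the Carleson condition. -/
theorem stmt_15 (l : ℕ → ℝ) (hd : ∀ k, 0 ≤ l k ∧ l k < 1)
    (hC : ∃ δ : ℝ, 0 < δ ∧ ∀ (n : ℕ) (s : Finset ℕ), n ∉ s →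
      δ ≤ ∏ k ∈ s, |l k - l n| / (1 - l k * l n))
    (ℓ : ℕ) (hℓ : 1 ≤ ℓ) :
    ∃ δ : ℝ, 0 < δ ∧ ∀ (n : ℕ) (s : Finset ℕ), n ∉ s →
      δ ≤ ∏ k ∈ s, |l k ^ ((ℓ : ℝ)⁻¹) - l n ^ ((ℓ : ℝ)⁻¹)| /
        (1 - l k ^ ((ℓ : ℝ)⁻¹) * l n ^ ((ℓ : ℝ)⁻¹)) := by
  obtain ⟨δ, hδ, hCar⟩ := hC
  have hℓ0 : ℓ ≠ 0 := Nat.one_le_iff_ne_zero.1 hℓ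
  have hroot : ∀ k, 0 ≤ l k ^ ((ℓ : ℝ)⁻¹) ∧ l k ^ ((ℓ : ℝ)⁻¹) < 1 := fun k =>
    ⟨Real.rpow_nonneg (hd k).1 _, by
      rcases eq_or_lt_of_le (hd k).1 with h | h
      · rw [← h, Real.zero_rpow (by positivity : ((ℓ:ℝ)⁻¹) ≠ 0)]; norm_num
      · exact Real.rpow_lt_one (hd k).1 (hd k).2 (by positivity)⟩
  have hpow : ∀ k, (l k ^ ((ℓ : ℝ)⁻¹)) ^ ℓ = l k := fun k =>
    Real.rpow_inv_natCast_pow (hd k).1 hℓ0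
  refine ⟨δ, hδ, fun n s hns => ?_⟩
  refine le_trans (hCar n s hns) (Finset.prod_le_prod (fun k _ => ?_) (fun k _ => ?_))
  · exact div_nonneg (abs_nonneg _) (by nlinarith [(hd k).1, (hd k).2, (hd n).1, (hd n).2])
  · have h := aux_pow ℓ (l k ^ ((ℓ : ℝ)⁻¹)) (l n ^ ((ℓ : ℝ)⁻¹))
      (hroot k).1 (hroot k).2 (hroot n).1 (hroot n).2
    rw [hpow k, hpow n] at h
    exact h
end

section
/- Let {λ_k} ⊂ 𝔻 with ∑(1 − |λ_k|²) < ∞, T the diagonal operator T e_k = λ_k e_k on a Hilbert space H with orthonormal basis {e_k}, and h = ∑ √(1 − |λ_k|²) e_k. If {T^n h}_{n=0}^∞ is a frame for H, then {λ_k} satisfies the Carleson condition. -/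
/-!
For `x = ∑_{k ∈ F} c_k e_k` one has `⟪x, T^p h⟫ = ∑_{k ∈ F} a_k λ_k^p` with
`a_k = conj c_k √(1 - |λ_k|²)`, so summing geometric series turns the lower frame bound into
`A ∑ |a_k|² / (1 - |λ_k|²) ≤ ∑_{j,k} a_j conj a_k / (1 - λ_j conj λ_k)`, a lower bound for the Gram
form of the Szegő kernels at the points `λ_k`. Take for `a` the partial fraction coefficients of
`B(w) / (1 - λ_n w)` on `F = s ∪ {n}`, where `B` is the finite Blaschke product with zeros
`conj λ_t`, `t ∈ s`. Since `B` vanishes at these points, only the `n`-th term of the form survives;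
the form equals `1 / (1 - |λ_n|²)` while `|a_n| = (∏_{t ∈ s} ρ(λ_t, λ_n))⁻¹`, `ρ` the
pseudo-hyperbolic distance. Hence `A ≤ (∏_{t ∈ s} ρ(λ_t, λ_n))²`, the Carleson condition with
`δ = √A`.
-/

open Finset ComplexConjugate
open scoped ComplexInnerProductSpace

namespace Polynomial

theorem reflect_sum {R ι : Type*} [Semiring R] (N : ℕ) (s : Finset ι) (f : ι → R[X]) :
    reflect N (∑ i ∈ s, f i) = ∑ i ∈ s, reflect N (f i) := by
  induction s using Finset.cons_induction with
  | empty => simp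
  | cons a s ha ih => rw [sum_cons, sum_cons, reflect_add, ih]

theorem reflect_one_X_sub_C {R : Type*} [Ring R] (a : R) :
    reflect 1 (X - C a) = 1 - C a * X := by
  rw [reflect_sub, reflect_one_X, reflect_C, pow_one]

theorem reflect_card_nodal {R ι : Type*} [CommRing R] [Nontrivial R] [DecidableEq ι]
    (s : Finset ι) (v : ι → R) :
    reflect #s (Lagrange.nodal s v) = ∏ i ∈ s, (1 - C (v i) * X) := by
  induction s using Finset.induction_on with
  | empty => simp [Lagrange.nodal, reflect_one]
  | insert a s ha ih =>
    rw [Lagrange.nodal_insert_eq_nodal ha, card_insert_of_notMem ha, add_comm,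
      reflect_mul _ _ (natDegree_X_sub_C_le _) Lagrange.natDegree_nodal.le,
      reflect_one_X_sub_C, ih, prod_insert ha]

variable {K ι : Type*} [Field K] [DecidableEq ι] {s : Finset ι} {v : ι → K}

theorem eval_reflect_eq_sum_nodalWeight (hvs : Set.InjOn v s) {Q : K[X]}
    (hQ : Q.degree < #s) (w : K) : (reflect (#s - 1) Q).eval w =
      ∑ i ∈ s, Q.eval (v i) * Lagrange.nodalWeight s v i * ∏ j ∈ s.erase i, (1 - v j * w) := by
  conv_lhs => rw [Lagrange.eq_interpolate hvs hQ,
    Lagrange.interpolate_eq_nodalWeight_mul_nodal_div_X_sub_C]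
  rw [reflect_sum, eval_finsetSum]
  refine sum_congr rfl fun i hi => ?_
  rw [← Lagrange.nodal_erase_eq_nodal_div hi, mul_right_comm, ← C_mul, mul_comm (eval _ _),
    reflect_C_mul, ← card_erase_of_mem hi, reflect_card_nodal]
  simp [eval_prod]

theorem sum_div_one_sub_mul_eq (hvs : Set.InjOn v s) {Q : K[X]} (hQ : Q.degree < #s) {w : K}
    (hw : ∀ i ∈ s, 1 - v i * w ≠ 0) :
    ∑ i ∈ s, Q.eval (v i) * Lagrange.nodalWeight s v i / (1 - v i * w) =
      (reflect (#s - 1) Q).eval w / ∏ i ∈ s, (1 - v i * w) := by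
  rw [eval_reflect_eq_sum_nodalWeight hvs hQ, sum_div]
  refine sum_congr rfl fun i hi => ?_
  rw [← mul_prod_erase s _ hi, mul_comm (1 - v i * w), ← div_div,
    mul_div_cancel_right₀ _ (prod_ne_zero_iff.2 fun j hj => hw j (mem_of_mem_erase hj))]

end Polynomial

section UnitDisc

theorem one_sub_norm_sq_pos {z : ℂ} (hz : ‖z‖ < 1) : 0 < 1 - ‖z‖ ^ 2 := by
  nlinarith [norm_nonneg z]

theorem norm_mul_conj_lt_one {z w : ℂ} (hz : ‖z‖ < 1) (hw : ‖w‖ < 1) : ‖z * conj w‖ < 1 := by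
  rw [norm_mul, Complex.norm_conj]
  exact mul_lt_one_of_nonneg_of_lt_one_left (norm_nonneg _) hz hw.le

theorem one_sub_mul_conj_ne_zero {z w : ℂ} (hz : ‖z‖ < 1) (hw : ‖w‖ < 1) : 1 - z * conj w ≠ 0 :=
  sub_ne_zero.2 fun h => by simpa [← h] using norm_mul_conj_lt_one hz hw

theorem norm_one_sub_mul_conj_self {z : ℂ} (hz : ‖z‖ < 1) : ‖1 - z * conj z‖ = 1 - ‖z‖ ^ 2 := by
  rw [Complex.mul_conj', ← Complex.ofReal_one, ← Complex.ofReal_pow, ← Complex.ofReal_sub,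
    Complex.norm_real, Real.norm_of_nonneg (one_sub_norm_sq_pos hz).le]

noncomputable def pseudoHyperbolic (z w : ℂ) : ℝ := ‖z - w‖ / ‖1 - conj z * w‖

theorem pseudoHyperbolic_pos {z w : ℂ} (hz : ‖z‖ < 1) (hw : ‖w‖ < 1) (hzw : z ≠ w) :
    0 < pseudoHyperbolic z w :=
  div_pos (norm_pos_iff.2 (sub_ne_zero.2 hzw))
    (norm_pos_iff.2 (by simpa [mul_comm] using one_sub_mul_conj_ne_zero hw hz))

end UnitDisc

section SzegoForm

variable {ι : Type*}

noncomputable def szegoForm (s : Finset ι) (v a : ι → ℂ) : ℂ :=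
  ∑ j ∈ s, ∑ k ∈ s, a j * conj (a k) / (1 - v j * conj (v k))

theorem hasSum_norm_sq_sum_mul_pow (s : Finset ι) (v a : ι → ℂ) (hv : ∀ k ∈ s, ‖v k‖ < 1) :
    HasSum (fun p : ℕ => ‖∑ k ∈ s, a k * v k ^ p‖ ^ 2) (szegoForm s v a).re := by
  have hsq (p : ℕ) : ((‖∑ k ∈ s, a k * v k ^ p‖ ^ 2 : ℝ) : ℂ) =
      ∑ j ∈ s, ∑ k ∈ s, a j * conj (a k) * (v j * conj (v k)) ^ p := by
    rw [Complex.ofReal_pow, ← Complex.mul_conj', map_sum, sum_mul_sum]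
    refine sum_congr rfl fun j _ => sum_congr rfl fun k _ => ?_
    simp only [map_mul, map_pow]
    ring
  have hsum :
      HasSum (fun p : ℕ => ((‖∑ k ∈ s, a k * v k ^ p‖ ^ 2 : ℝ) : ℂ)) (szegoForm s v a) := by
    simp only [hsq, szegoForm, div_eq_mul_inv]
    exact hasSum_sum fun j hj => hasSum_sum fun k hk =>
      (hasSum_geometric_of_norm_lt_one (norm_mul_conj_lt_one (hv j hj) (hv k hk))).mul_left _
  simpa only [Complex.ofReal_re] using Complex.hasSum_re hsum

variable [DecidableEq ι] {n : ι} {s : Finset ι} {v : ι → ℂ}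

noncomputable def blaschkeCoeff (n : ι) (s : Finset ι) (v : ι → ℂ) (j : ι) : ℂ :=
  (∏ t ∈ s, (1 - conj (v t) * v j)) * Lagrange.nodalWeight (insert n s) v j

theorem sum_blaschkeCoeff_div (hns : n ∉ s) (hinj : Set.InjOn v (insert n s : Finset ι))
    {w : ℂ} (hw : ∀ i ∈ insert n s, 1 - v i * w ≠ 0) :
    ∑ j ∈ insert n s, blaschkeCoeff n s v j / (1 - v j * w) =
      (∏ t ∈ s, (w - conj (v t))) / ∏ i ∈ insert n s, (1 - v i * w) := by
  set Q := Polynomial.reflect #s (Lagrange.nodal s (conj ∘ v))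
  have hQ (z : ℂ) : Q.eval z = ∏ t ∈ s, (1 - conj (v t) * z) := by
    simp [Q, Polynomial.reflect_card_nodal, Polynomial.eval_prod]
  have hdeg : Q.degree < #(insert n s) := by
    refine Polynomial.degree_le_natDegree.trans_lt ?_
    rw [card_insert_of_notMem hns, Nat.cast_lt]
    exact Polynomial.natDegree_reflect_le.trans_lt (by simp [Lagrange.natDegree_nodal])
  have hrefl : Polynomial.reflect (#(insert n s) - 1) Q = Lagrange.nodal s (conj ∘ v) := by
    rw [card_insert_of_notMem hns, Nat.add_sub_cancel, Polynomial.reflect_reflect]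
  simp only [blaschkeCoeff, ← hQ]
  rw [Polynomial.sum_div_one_sub_mul_eq hinj hdeg hw, hrefl, Lagrange.eval_nodal]
  rfl

theorem prod_pseudoHyperbolic_pos (hns : n ∉ s) (hinj : Set.InjOn v (insert n s : Finset ι))
    (hv : ∀ k ∈ insert n s, ‖v k‖ < 1) : 0 < ∏ k ∈ s, pseudoHyperbolic (v k) (v n) :=
  prod_pos fun k hk =>
    pseudoHyperbolic_pos (hv k (mem_insert_of_mem hk)) (hv n (mem_insert_self n s))
      fun h => hns (hinj (mem_insert_of_mem hk) (mem_insert_self n s) h ▸ hk)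

theorem szegoForm_blaschkeCoeff (hns : n ∉ s) (hinj : Set.InjOn v (insert n s : Finset ι))
    (hv : ∀ k ∈ insert n s, ‖v k‖ < 1) :
    szegoForm (insert n s) v (blaschkeCoeff n s v) = conj (blaschkeCoeff n s v n) *
      ((∏ t ∈ s, (conj (v n) - conj (v t))) / ∏ i ∈ insert n s, (1 - v i * conj (v n))) := by
  have hG (k : ι) (hk : k ∈ insert n s) :
      ∑ j ∈ insert n s, blaschkeCoeff n s v j * conj (blaschkeCoeff n s v k) /
        (1 - v j * conj (v k)) = conj (blaschkeCoeff n s v k) *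
      ((∏ t ∈ s, (conj (v k) - conj (v t))) / ∏ i ∈ insert n s, (1 - v i * conj (v k))) := by
    rw [← sum_blaschkeCoeff_div hns hinj fun i hi =>
      one_sub_mul_conj_ne_zero (hv i hi) (hv k hk), mul_sum]
    exact sum_congr rfl fun j _ => by ring
  rw [szegoForm, sum_comm, sum_congr rfl hG, sum_insert hns, add_eq_left]
  exact sum_eq_zero fun k hk => by rw [prod_eq_zero hk (sub_self _), zero_div, mul_zero]

theorem norm_blaschkeCoeff_self (hns : n ∉ s) :
    ‖blaschkeCoeff n s v n‖ = (∏ k ∈ s, pseudoHyperbolic (v k) (v n))⁻¹ := by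
  rw [blaschkeCoeff, Lagrange.nodalWeight, erase_insert hns, ← prod_mul_distrib, norm_prod,
    ← prod_inv_distrib]
  refine prod_congr rfl fun k _ => ?_
  rw [norm_mul, norm_inv, pseudoHyperbolic, inv_div, norm_sub_rev (v n), div_eq_mul_inv]

theorem norm_szegoForm_blaschkeCoeff (hns : n ∉ s) (hinj : Set.InjOn v (insert n s : Finset ι))
    (hv : ∀ k ∈ insert n s, ‖v k‖ < 1) :
    ‖szegoForm (insert n s) v (blaschkeCoeff n s v)‖ = (1 - ‖v n‖ ^ 2)⁻¹ := by
  set P := ∏ k ∈ s, pseudoHyperbolic (v k) (v n)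
  have hP : P ≠ 0 := (prod_pseudoHyperbolic_pos hns hinj hv).ne'
  have hG : ‖(∏ t ∈ s, (conj (v n) - conj (v t))) / ∏ i ∈ insert n s, (1 - v i * conj (v n))‖ =
      P / (1 - ‖v n‖ ^ 2) := by
    rw [prod_insert hns, norm_div, norm_mul,
      norm_one_sub_mul_conj_self (hv n (mem_insert_self n s)), norm_prod, norm_prod,
      div_mul_eq_div_div_swap, ← prod_div_distrib]
    congr 1
    refine prod_congr rfl fun k _ => ?_
    rw [pseudoHyperbolic, ← map_sub, Complex.norm_conj, norm_sub_rev,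
      ← Complex.norm_conj (1 - v k * _)]
    simp [mul_comm]
  rw [szegoForm_blaschkeCoeff hns hinj hv, norm_mul, Complex.norm_conj,
    norm_blaschkeCoeff_self hns, hG, ← mul_div_assoc, inv_mul_cancel₀ hP, one_div]

theorem le_sq_prod_pseudoHyperbolic_of_le_szegoForm {A : ℝ} (hns : n ∉ s)
    (hinj : Set.InjOn v (insert n s : Finset ι)) (hv : ∀ k ∈ insert n s, ‖v k‖ < 1)
    (hlow : ∀ a : ι → ℂ,
      A * ∑ k ∈ insert n s, ‖a k‖ ^ 2 / (1 - ‖v k‖ ^ 2) ≤ (szegoForm (insert n s) v a).re) :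
    A ≤ (∏ k ∈ s, pseudoHyperbolic (v k) (v n)) ^ 2 := by
  obtain hA | hA := le_or_gt A 0
  · exact hA.trans (sq_nonneg _)
  have hvn := one_sub_norm_sq_pos (hv n (mem_insert_self n s))
  have hP := prod_pseudoHyperbolic_pos hns hinj hv
  set a := blaschkeCoeff n s v
  have key : A * (‖a n‖ ^ 2 / (1 - ‖v n‖ ^ 2)) ≤ (1 - ‖v n‖ ^ 2)⁻¹ :=
    calc A * (‖a n‖ ^ 2 / (1 - ‖v n‖ ^ 2))
        ≤ A * ∑ k ∈ insert n s, ‖a k‖ ^ 2 / (1 - ‖v k‖ ^ 2) := by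
          refine mul_le_mul_of_nonneg_left ?_ hA.le
          exact single_le_sum (f := fun k => ‖a k‖ ^ 2 / (1 - ‖v k‖ ^ 2))
            (fun k hk => div_nonneg (sq_nonneg _) (one_sub_norm_sq_pos (hv k hk)).le)
            (mem_insert_self n s)
      _ ≤ (szegoForm (insert n s) v a).re := hlow a
      _ ≤ ‖szegoForm (insert n s) v a‖ := Complex.re_le_norm _
      _ = (1 - ‖v n‖ ^ 2)⁻¹ := norm_szegoForm_blaschkeCoeff hns hinj hv
  rw [norm_blaschkeCoeff_self hns, mul_div_assoc', div_le_iff₀ hvn, inv_mul_cancel₀ hvn.ne',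
    inv_pow, ← div_eq_mul_inv, div_le_one (pow_pos hP 2)] at key
  exact key

theorem injective_of_le_szegoForm {A : ℝ} (hA : 0 < A) (hv : ∀ k, ‖v k‖ < 1)
    (hlow : ∀ (s : Finset ι) (a : ι → ℂ),
      A * ∑ k ∈ s, ‖a k‖ ^ 2 / (1 - ‖v k‖ ^ 2) ≤ (szegoForm s v a).re) :
    Function.Injective v := by
  intro j k hjk
  by_contra hne
  set a : ι → ℂ := fun i => if i = j then 1 else -1
  have hzero : szegoForm {j, k} v a = 0 := by
    simp only [a, szegoForm, sum_pair hne, hjk, if_pos, if_neg (Ne.symm hne), map_one, map_neg]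
    ring
  have hpos : 0 < A * ∑ i ∈ {j, k}, ‖a i‖ ^ 2 / (1 - ‖v i‖ ^ 2) := by
    rw [sum_pair hne]
    simp only [a, if_pos, if_neg (Ne.symm hne), norm_neg, norm_one, one_pow]
    have := one_sub_norm_sq_pos (hv j)
    have := one_sub_norm_sq_pos (hv k)
    positivity
  have := hlow {j, k} a
  rw [hzero, Complex.zero_re] at this
  linarith

end SzegoForm

section Hilbert

variable {ι H : Type*} [NormedAddCommGroup H] [InnerProductSpace ℂ H]

theorem ContinuousLinearMap.pow_apply_of_apply_eq_smul (T : H →L[ℂ] H) {x : H} {μ : ℂ}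
    (h : T x = μ • x) (p : ℕ) : (T ^ p) x = μ ^ p • x := by
  induction p with
  | zero => simp
  | succ p ih => rw [pow_succ', mul_apply_eq_comp, ih, map_smul, h, smul_smul, pow_succ]

theorem Orthonormal.norm_sum_smul_sq {b : ι → H} (hb : Orthonormal ℂ b) (s : Finset ι)
    (c : ι → ℂ) :
    ‖∑ i ∈ s, c i • b i‖ ^ 2 = ∑ i ∈ s, ‖c i‖ ^ 2 := by
  simpa using hb.orthogonalFamily.norm_sum c s

variable {b : ι → H} {l w : ι → ℂ} {T : H →L[ℂ] H} {h : H}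

theorem Orthonormal.inner_pow_apply_of_hasSum (hb : Orthonormal ℂ b)
    (hT : ∀ k, T (b k) = l k • b k) (hh : HasSum (fun k => w k • b k) h) (i : ι) (p : ℕ) :
    ⟪b i, (T ^ p) h⟫ = w i * l i ^ p := by
  have hsum := hh.mapL (innerSL ℂ (b i) ∘L T ^ p)
  simp only [ContinuousLinearMap.comp_apply, innerSL_apply_apply, map_smul,
    T.pow_apply_of_apply_eq_smul (hT _), smul_smul] at hsum
  refine (hsum.unique (hasSum_single i fun k hk => ?_)).trans ?_
  · rw [hb.inner_eq_zero (Ne.symm hk), smul_zero]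
  · simp [inner_self_eq_norm_sq_to_K, hb.norm_eq_one]

theorem Orthonormal.le_tsum_norm_sq_sum_mul_pow (hb : Orthonormal ℂ b)
    (hT : ∀ k, T (b k) = l k • b k) (hh : HasSum (fun k => w k • b k) h) (hw : ∀ k, w k ≠ 0)
    {A : ℝ} (hA : ∀ x : H, A * ‖x‖ ^ 2 ≤ ∑' p : ℕ, ‖⟪x, (T ^ p) h⟫‖ ^ 2)
    (s : Finset ι) (a : ι → ℂ) :
    A * ∑ k ∈ s, ‖a k‖ ^ 2 / ‖w k‖ ^ 2 ≤ ∑' p : ℕ, ‖∑ k ∈ s, a k * l k ^ p‖ ^ 2 := by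
  set x := ∑ k ∈ s, conj (a k / w k) • b k
  have hx : ‖x‖ ^ 2 = ∑ k ∈ s, ‖a k‖ ^ 2 / ‖w k‖ ^ 2 := by
    simp only [x, hb.norm_sum_smul_sq, Complex.norm_conj, norm_div, div_pow]
  have hinner (p : ℕ) : ⟪x, (T ^ p) h⟫ = ∑ k ∈ s, a k * l k ^ p := by
    simp only [x, sum_inner, inner_smul_left, Complex.conj_conj,
      hb.inner_pow_apply_of_hasSum hT hh]
    exact sum_congr rfl fun k _ => by field_simp [hw k]
  simpa only [hx, hinner] using hA x

end Hilbert

theorem stmt_17_general {H : Type*} [NormedAddCommGroup H] [InnerProductSpace ℂ H]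
    (b : HilbertBasis ℕ ℂ H) (l : ℕ → ℂ) (hd : ∀ k, ‖l k‖ < 1)
    (T : H →L[ℂ] H) (hT : ∀ k, T (b k) = l k • b k)
    (h : H) (hh : HasSum (fun k => (Real.sqrt (1 - ‖l k‖ ^ 2) : ℂ) • b k) h)
    (hframe : ∃ A B : ℝ, 0 < A ∧ 0 < B ∧ ∀ x : H,
      A * ‖x‖ ^ 2 ≤ ∑' n : ℕ, ‖⟪x, (T ^ n) h⟫‖ ^ 2 ∧
      ∑' n : ℕ, ‖⟪x, (T ^ n) h⟫‖ ^ 2 ≤ B * ‖x‖ ^ 2) :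
    ∃ δ : ℝ, 0 < δ ∧ ∀ (n : ℕ) (s : Finset ℕ), n ∉ s →
      δ ≤ ∏ k ∈ s, ‖l k - l n‖ / ‖1 - (starRingEnd ℂ) (l k) * l n‖ := by
  obtain ⟨A, _, hA, -, hbounds⟩ := hframe
  have hw (k : ℕ) : (Real.sqrt (1 - ‖l k‖ ^ 2) : ℂ) ≠ 0 := by
    exact_mod_cast (Real.sqrt_pos.2 (one_sub_norm_sq_pos (hd k))).ne'
  have hnorm_w (k : ℕ) : ‖(Real.sqrt (1 - ‖l k‖ ^ 2) : ℂ)‖ ^ 2 = 1 - ‖l k‖ ^ 2 := by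
    rw [Complex.norm_real, Real.norm_eq_abs, sq_abs, Real.sq_sqrt (one_sub_norm_sq_pos (hd k)).le]
  have hlow (s : Finset ℕ) (a : ℕ → ℂ) :
      A * ∑ k ∈ s, ‖a k‖ ^ 2 / (1 - ‖l k‖ ^ 2) ≤ (szegoForm s l a).re := by
    simpa only [hnorm_w, (hasSum_norm_sq_sum_mul_pow s l a fun k _ => hd k).tsum_eq] using
      b.orthonormal.le_tsum_norm_sq_sum_mul_pow hT hh hw (fun x => (hbounds x).1) s a
  refine ⟨Real.sqrt A, Real.sqrt_pos.2 hA, fun n s hns => ?_⟩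
  have hcarleson := le_sq_prod_pseudoHyperbolic_of_le_szegoForm hns
    (injective_of_le_szegoForm hA hd hlow).injOn (fun k _ => hd k) (hlow _)
  exact (Real.sqrt_le_left (by positivity)).2 hcarleson

/-- If the iterated system `{T^n h}` of the diagonal operator `T e_k = λ_k e_k` applied
to `h = ∑ √(1-|λ_k|²) e_k` is a frame, then `{λ k}` satisfies the Carleson condition. -/
theorem stmt_17 {H : Type*} [NormedAddCommGroup H] [InnerProductSpace ℂ H]
    [CompleteSpace H]
    (b : HilbertBasis ℕ ℂ H) (l : ℕ → ℂ) (hd : ∀ k, ‖l k‖ < 1)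
    (hsum : Summable (fun k => 1 - ‖l k‖ ^ 2))
    (T : H →L[ℂ] H) (hT : ∀ k, T (b k) = l k • b k)
    (h : H) (hh : HasSum (fun k => (Real.sqrt (1 - ‖l k‖ ^ 2) : ℂ) • b k) h)
    (hframe : ∃ A B : ℝ, 0 < A ∧ 0 < B ∧ ∀ x : H,
      A * ‖x‖ ^ 2 ≤ ∑' n : ℕ, ‖⟪x, (T ^ n) h⟫‖ ^ 2 ∧
      ∑' n : ℕ, ‖⟪x, (T ^ n) h⟫‖ ^ 2 ≤ B * ‖x‖ ^ 2) :
    ∃ δ : ℝ, 0 < δ ∧ ∀ (n : ℕ) (s : Finset ℕ), n ∉ s →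
      δ ≤ ∏ k ∈ s, ‖l k - l n‖ / ‖1 - (starRingEnd ℂ) (l k) * l n‖ :=
  stmt_17_general b l hd T hT h hh hframe
end

section
/- Let {e_k} be an orthonormal basis of a Hilbert space H, T a bounded operator on H, h ∈ H, and ℓ ∈ ℕ. Suppose T_ℓ is a bounded surjective operator on H with T_ℓ^ℓ = T. If {T^n h}_{n=0}^∞ is a frame for H, then {T_ℓ^n h}_{n=0}^∞ is also a frame for H. -/
/-!
The sequence `(Tₗⁿ h)ₙ` splits along the residue classes of `n` mod `ℓ` into the `ℓ` sequences
`(Tₗʳ (Tᵐ h))ₘ`, `0 ≤ r < ℓ`. Each of them is a Bessel sequence, since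
`⟪x, Tₗʳ y⟫ = ⟪(Tₗʳ)† x, y⟫` and `(Tᵐ h)ₘ` is one; hence so is their finite union. The class
`r = 0` is the frame `(Tᵐ h)ₘ` itself, which supplies the lower frame bound.
-/

open Finset
open scoped ComplexInnerProductSpace

lemma Nat.summable_of_summable_residueClasses {f : ℕ → ℝ} (hf : 0 ≤ f) (N : ℕ) [NeZero N]
    (h : ∀ j : ZMod N, Summable fun m => f (j.val + N * m)) : Summable f := by
  rw [← (Nat.residueClassesEquiv N).symm.summable_iff]
  exact (summable_prod_of_nonneg fun _ => hf _).2 ⟨h, .of_finite⟩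

section Frame

variable (𝕜 : Type*) {E F ι : Type*} [RCLike 𝕜] [NormedAddCommGroup E] [InnerProductSpace 𝕜 E]
  [NormedAddCommGroup F] [NormedSpace 𝕜 F]

def IsFrame (f : ι → E) : Prop :=
  ∃ A B : ℝ, 0 < A ∧ 0 < B ∧ ∀ x : E,
    A * ‖x‖ ^ 2 ≤ ∑' i, ‖inner 𝕜 x (f i)‖ ^ 2 ∧ ∑' i, ‖inner 𝕜 x (f i)‖ ^ 2 ≤ B * ‖x‖ ^ 2

variable {𝕜}

lemma summable_norm_inner_sq_of_lower_frame_bound {f : ι → E} {A : ℝ} (hA : 0 < A)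
    (hf : ∀ x : E, A * ‖x‖ ^ 2 ≤ ∑' i, ‖inner 𝕜 x (f i)‖ ^ 2) (x : E) :
    Summable fun i => ‖inner 𝕜 x (f i)‖ ^ 2 := by
  by_contra hns
  have hx : A * ‖x‖ ^ 2 ≤ 0 := tsum_eq_zero_of_not_summable hns ▸ hf x
  have hx0 : x = 0 := by
    simpa using le_antisymm (nonpos_of_mul_nonpos_right hx hA) (sq_nonneg ‖x‖)
  exact hns (by simp [hx0])

lemma tsum_norm_inner_map_sq_le {f : ι → E} {B : ℝ} (hB : 0 ≤ B)
    (hf : ∀ x : E, ∑' i, ‖inner 𝕜 x (f i)‖ ^ 2 ≤ B * ‖x‖ ^ 2) (R : F →L[𝕜] E) (x : F) :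
    ∑' i, ‖inner 𝕜 (R x) (f i)‖ ^ 2 ≤ B * ‖R‖ ^ 2 * ‖x‖ ^ 2 :=
  calc ∑' i, ‖inner 𝕜 (R x) (f i)‖ ^ 2 ≤ B * ‖R x‖ ^ 2 := hf (R x)
    _ ≤ B * (‖R‖ * ‖x‖) ^ 2 := by gcongr; exact R.le_opNorm x
    _ = B * ‖R‖ ^ 2 * ‖x‖ ^ 2 := by ring

open ContinuousLinearMap in
theorem isFrame_pow_of_pow_eq [CompleteSpace E] {S T : E →L[𝕜] E} {ℓ : ℕ} [NeZero ℓ]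
    (hST : S ^ ℓ = T) (h : E) (hT : IsFrame 𝕜 fun n => (T ^ n) h) :
    IsFrame 𝕜 fun n => (S ^ n) h := by
  obtain ⟨A, B, hA, hB, hAB⟩ := hT
  have hres (x : E) (j : ZMod ℓ) (m : ℕ) : ‖inner 𝕜 x ((S ^ (j.val + ℓ * m)) h)‖ ^ 2 =
      ‖inner 𝕜 (adjoint (S ^ j.val) x) ((T ^ m) h)‖ ^ 2 := by
    rw [pow_add, pow_mul, hST, mul_apply_eq_comp, adjoint_inner_left]
  have hsum (x : E) : Summable fun n => ‖inner 𝕜 x ((S ^ n) h)‖ ^ 2 :=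
    Nat.summable_of_summable_residueClasses (fun _ => by positivity) ℓ fun j => by
      simpa only [hres] using
        summable_norm_inner_sq_of_lower_frame_bound hA (fun x => (hAB x).1) _
  have hsplit (x : E) : ∑' n, ‖inner 𝕜 x ((S ^ n) h)‖ ^ 2 =
      ∑ j : ZMod ℓ, ∑' m, ‖inner 𝕜 (adjoint (S ^ j.val) x) ((T ^ m) h)‖ ^ 2 := by
    simp only [Nat.sumByResidueClasses (hsum x) ℓ, hres]
  refine ⟨A, B * (∑ j : ZMod ℓ, ‖adjoint (S ^ j.val)‖ ^ 2 + 1), hA, by positivity, fun x => ?_⟩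
  rw [hsplit]
  constructor
  · calc A * ‖x‖ ^ 2 ≤ ∑' m, ‖inner 𝕜 (adjoint (S ^ (0 : ZMod ℓ).val) x) ((T ^ m) h)‖ ^ 2 := by
          rw [ZMod.val_zero, pow_zero, adjoint_one, one_apply_eq_self]
          exact (hAB x).1
      _ ≤ _ := single_le_sum (f := fun j : ZMod ℓ =>
          ∑' m, ‖inner 𝕜 (adjoint (S ^ j.val) x) ((T ^ m) h)‖ ^ 2)
          (fun _ _ => tsum_nonneg fun _ => by positivity) (mem_univ 0)
  · calc _ ≤ ∑ j : ZMod ℓ, B * ‖adjoint (S ^ j.val)‖ ^ 2 * ‖x‖ ^ 2 :=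
          sum_le_sum fun j _ => tsum_norm_inner_map_sq_le hB.le (fun x => (hAB x).2) _ x
      _ = B * (∑ j : ZMod ℓ, ‖adjoint (S ^ j.val)‖ ^ 2) * ‖x‖ ^ 2 := by
          rw [mul_sum, sum_mul]
      _ ≤ _ := by gcongr; linarith

end Frame

theorem stmt_18_general {H : Type*} [NormedAddCommGroup H] [InnerProductSpace ℂ H]
    [CompleteSpace H]
    (T Tl : H →L[ℂ] H) (h : H) (ℓ : ℕ) (hℓ : 1 ≤ ℓ)
    (hpow : Tl ^ ℓ = T)
    (hframe : ∃ A B : ℝ, 0 < A ∧ 0 < B ∧ ∀ x : H,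
      A * ‖x‖ ^ 2 ≤ ∑' n : ℕ, ‖⟪x, (T ^ n) h⟫‖ ^ 2 ∧
      ∑' n : ℕ, ‖⟪x, (T ^ n) h⟫‖ ^ 2 ≤ B * ‖x‖ ^ 2) :
    ∃ A B : ℝ, 0 < A ∧ 0 < B ∧ ∀ x : H,
      A * ‖x‖ ^ 2 ≤ ∑' n : ℕ, ‖⟪x, (Tl ^ n) h⟫‖ ^ 2 ∧
      ∑' n : ℕ, ‖⟪x, (Tl ^ n) h⟫‖ ^ 2 ≤ B * ‖x‖ ^ 2 := by
  have : NeZero ℓ := ⟨by omega⟩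
  exact isFrame_pow_of_pow_eq hpow h hframe

/-- If `T_ℓ` is a bounded surjective operator with `T_ℓ^ℓ = T` and `{T^n h}` is a frame,
then `{T_ℓ^n h}` is also a frame. -/
theorem stmt_18 {H : Type*} [NormedAddCommGroup H] [InnerProductSpace ℂ H]
    [CompleteSpace H]
    (b : HilbertBasis ℕ ℂ H)
    (T Tl : H →L[ℂ] H) (h : H) (ℓ : ℕ) (hℓ : 1 ≤ ℓ)
    (hsurj : Function.Surjective Tl) (hpow : Tl ^ ℓ = T)
    (hframe : ∃ A B : ℝ, 0 < A ∧ 0 < B ∧ ∀ x : H,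
      A * ‖x‖ ^ 2 ≤ ∑' n : ℕ, ‖⟪x, (T ^ n) h⟫‖ ^ 2 ∧
      ∑' n : ℕ, ‖⟪x, (T ^ n) h⟫‖ ^ 2 ≤ B * ‖x‖ ^ 2) :
    ∃ A B : ℝ, 0 < A ∧ 0 < B ∧ ∀ x : H,
      A * ‖x‖ ^ 2 ≤ ∑' n : ℕ, ‖⟪x, (Tl ^ n) h⟫‖ ^ 2 ∧
      ∑' n : ℕ, ‖⟪x, (Tl ^ n) h⟫‖ ^ 2 ≤ B * ‖x‖ ^ 2 :=
  stmt_18_general T Tl h ℓ hℓ hpow hframe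
end

section
/- Let {e_k} be an orthonormal basis of a Hilbert space H, let the index blocks be I_N = {N(N−1)/2, ..., N(N+1)/2 − 1}, each of length N, and let λ_k = 2 if k belongs to an odd block and λ_k = 1/2 if k belongs to an even block. Then T e_k = λ_k e_{k+1} defines a bounded operator on H, and the sequence {T^n e_1}_{n=0}^∞ is neither a Bessel sequence nor satisfies the lower frame condition: it has a subsequence with norms tending to ∞ and a subsequence with norms tending to 0. -/
open Filter Finset Topology

noncomputable section StmtAux

/-- The block index `N` such that `k ∈ I_N = [N(N-1)/2, N(N+1)/2)`. -/
def blockOf (k : ℕ) : ℕ :=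
  Nat.find (⟨k + 1, by
    show k < (k + 1) * (k + 1 + 1) / 2
    have h : (k + 1) * 2 ≤ (k + 1) * (k + 1 + 1) := by nlinarith
    have := (Nat.le_div_iff_mul_le (by norm_num : 0 < 2)).2 h
    omega⟩ : ∃ N, k < N * (N + 1) / 2)

lemma blockOf_eq {N k : ℕ} (hN : 1 ≤ N) (h1 : N * (N - 1) / 2 ≤ k)
    (h2 : k < N * (N + 1) / 2) : blockOf k = N := by
  have hex : ∃ M, k < M * (M + 1) / 2 := ⟨N, h2⟩
  refine le_antisymm (Nat.find_le h2) ?_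
  by_contra h
  push_neg at h
  have hspec : k < blockOf k * (blockOf k + 1) / 2 := Nat.find_spec hex
  have hle : blockOf k ≤ N - 1 := by omega
  have hmono : blockOf k * (blockOf k + 1) ≤ (N - 1) * N :=
    Nat.mul_le_mul hle (by omega)
  have hdiv : blockOf k * (blockOf k + 1) / 2 ≤ (N - 1) * N / 2 :=
    Nat.div_le_div_right hmono
  have hNN : (N - 1) * N / 2 = N * (N - 1) / 2 := by rw [Nat.mul_comm]
  omega

/-- real weight for Lean index `i` (i.e. `k = i + 1`). -/
def rwt (i : ℕ) : ℝ := if Odd (blockOf (i + 1)) then 2 else 1 / 2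

def wwt (i : ℕ) : ℂ := (rwt i : ℂ)

lemma rwt_pos (i : ℕ) : 0 < rwt i := by unfold rwt; split <;> norm_num

lemma rwt_le (i : ℕ) : rwt i ≤ 2 := by unfold rwt; split <;> norm_num

lemma norm_wwt (i : ℕ) : ‖wwt i‖ = rwt i := by
  rw [wwt, Complex.norm_real, Real.norm_eq_abs, abs_of_pos (rwt_pos i)]

def shiftFun (f : ℕ → ℂ) : ℕ → ℂ
  | 0 => 0
  | k + 1 => wwt k * f k

lemma memℓp_shiftFun (f : lp (fun _ : ℕ => ℂ) 2) : Memℓp (shiftFun f) 2 := by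
  apply memℓp_gen
  have hf : Summable fun k => ‖(f : ℕ → ℂ) k‖ ^ ((2 : ENNReal)).toReal :=
    Memℓp.summable (by norm_num) (lp.memℓp f)
  have htr : ((2 : ENNReal)).toReal = (2 : ℝ) := by norm_num
  rw [htr] at hf ⊢
  rw [← summable_nat_add_iff 1]
  have h4 : Summable fun k => (4 : ℝ) * ‖(f : ℕ → ℂ) k‖ ^ (2 : ℝ) := hf.mul_left 4
  refine h4.of_nonneg_of_le (fun k => Real.rpow_nonneg (norm_nonneg _) _) fun k => ?_
  show ‖shiftFun f (k + 1)‖ ^ (2 : ℝ) ≤ _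
  have hb : ‖shiftFun f (k + 1)‖ ≤ 2 * ‖(f : ℕ → ℂ) k‖ := by
    show ‖wwt k * (f : ℕ → ℂ) k‖ ≤ _
    rw [norm_mul, norm_wwt]
    exact mul_le_mul_of_nonneg_right (rwt_le k) (norm_nonneg _)
  calc ‖shiftFun f (k + 1)‖ ^ (2 : ℝ) ≤ (2 * ‖(f : ℕ → ℂ) k‖) ^ (2 : ℝ) :=
        Real.rpow_le_rpow (norm_nonneg _) hb (by norm_num)
    _ = 4 * ‖(f : ℕ → ℂ) k‖ ^ (2 : ℝ) := by
        rw [Real.mul_rpow (by norm_num) (norm_nonneg _),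
          show (2:ℝ) ^ (2:ℝ) = 4 by
            rw [show (2:ℝ) ^ (2:ℝ) = (2:ℝ) ^ ((2:ℕ):ℝ) by norm_num, Real.rpow_natCast]
            norm_num]


/-- The weighted shift as a linear map on `ℓ²`. -/
def TlpLin : lp (fun _ : ℕ => ℂ) 2 →ₗ[ℂ] lp (fun _ : ℕ => ℂ) 2 where
  toFun f := ⟨shiftFun f, memℓp_shiftFun f⟩
  map_add' f g := by
    apply lp.ext
    funext k
    cases k with
    | zero => simp [shiftFun]; show (0:ℂ) = shiftFun f 0 + shiftFun g 0; simp [shiftFun]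
    | succ k => simp [shiftFun]; show _ = shiftFun f (k+1) + shiftFun g (k+1); simp only [shiftFun]; ring
  map_smul' c f := by
    apply lp.ext
    funext k
    cases k with
    | zero => simp [shiftFun]
    | succ k => simp [shiftFun]; ring

lemma TlpLin_bound (f : lp (fun _ : ℕ => ℂ) 2) : ‖TlpLin f‖ ≤ 2 * ‖f‖ := by
  have htr : ((2 : ENNReal)).toReal = (2 : ℝ) := by norm_num
  have h2 : (0:ℝ) < ((2 : ENNReal)).toReal := by norm_num
  have key : ‖TlpLin f‖ ^ (2:ℝ) ≤ (2 * ‖f‖) ^ (2:ℝ) := by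
    have e1 : ‖TlpLin f‖ ^ (2:ℝ) = ∑' k, ‖(TlpLin f : ℕ → ℂ) k‖ ^ (2:ℝ) := by
      have := lp.norm_rpow_eq_tsum h2 (TlpLin f); rwa [htr] at this
    have e2 : ‖f‖ ^ (2:ℝ) = ∑' k, ‖(f : ℕ → ℂ) k‖ ^ (2:ℝ) := by
      have := lp.norm_rpow_eq_tsum h2 f; rwa [htr] at this
    have hsum : Summable fun k => ‖(f : ℕ → ℂ) k‖ ^ (2:ℝ) := by
      have := Memℓp.summable h2 (lp.memℓp f); rwa [htr] at this
    have hsumT : Summable fun k => ‖(TlpLin f : ℕ → ℂ) k‖ ^ (2:ℝ) := by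
      have := Memℓp.summable h2 (lp.memℓp (TlpLin f)); rwa [htr] at this
    rw [e1]
    have hle : ∑' k, ‖(TlpLin f : ℕ → ℂ) k‖ ^ (2:ℝ)
        ≤ ∑' k, (4:ℝ) * ‖(f : ℕ → ℂ) k‖ ^ (2:ℝ) := by
      rw [Summable.tsum_eq_zero_add hsumT]
      have h0 : ‖(TlpLin f : ℕ → ℂ) 0‖ ^ (2:ℝ) = 0 := by
        show ‖shiftFun f 0‖ ^ (2:ℝ) = 0
        simp only [shiftFun, norm_zero]
        exact Real.zero_rpow (by norm_num)
      rw [h0, zero_add]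
      refine Summable.tsum_le_tsum ?_ ((summable_nat_add_iff 1).mpr hsumT) (hsum.mul_left 4)
      intro k
      · show ‖shiftFun f (k+1)‖ ^ (2:ℝ) ≤ _
        have hb : ‖shiftFun f (k + 1)‖ ≤ 2 * ‖(f : ℕ → ℂ) k‖ := by
          show ‖wwt k * (f : ℕ → ℂ) k‖ ≤ _
          rw [norm_mul, norm_wwt]
          exact mul_le_mul_of_nonneg_right (rwt_le k) (norm_nonneg _)
        calc ‖shiftFun f (k + 1)‖ ^ (2 : ℝ) ≤ (2 * ‖(f : ℕ → ℂ) k‖) ^ (2 : ℝ) :=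
              Real.rpow_le_rpow (norm_nonneg _) hb (by norm_num)
          _ = 4 * ‖(f : ℕ → ℂ) k‖ ^ (2 : ℝ) := by
              rw [Real.mul_rpow (by norm_num) (norm_nonneg _),
                show (2:ℝ) ^ (2:ℝ) = 4 by
                  rw [show (2:ℝ) ^ (2:ℝ) = (2:ℝ) ^ ((2:ℕ):ℝ) by norm_num,
                    Real.rpow_natCast]
                  norm_num]
    calc ∑' k, ‖(TlpLin f : ℕ → ℂ) k‖ ^ (2:ℝ) ≤ ∑' k, (4:ℝ) * ‖(f : ℕ → ℂ) k‖ ^ (2:ℝ) := hle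
      _ = 4 * ∑' k, ‖(f : ℕ → ℂ) k‖ ^ (2:ℝ) := tsum_mul_left
      _ = 4 * ‖f‖ ^ (2:ℝ) := by rw [e2]
      _ = (2 * ‖f‖) ^ (2:ℝ) := by
          rw [Real.mul_rpow (by norm_num) (norm_nonneg _),
            show (2:ℝ) ^ (2:ℝ) = 4 by
              rw [show (2:ℝ) ^ (2:ℝ) = (2:ℝ) ^ ((2:ℕ):ℝ) by norm_num, Real.rpow_natCast]
              norm_num]
  exact (Real.rpow_le_rpow_iff (norm_nonneg _) (by positivity) (by norm_num)).1 key

/-- The weighted shift as a bounded operator on `ℓ²`. -/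
def Tlp : lp (fun _ : ℕ => ℂ) 2 →L[ℂ] lp (fun _ : ℕ => ℂ) 2 :=
  LinearMap.mkContinuous TlpLin 2 TlpLin_bound

lemma Tlp_single (j : ℕ) :
    Tlp (lp.single 2 j (1 : ℂ)) = wwt j • lp.single 2 (j + 1) (1 : ℂ) := by
  apply lp.ext
  funext k
  rw [lp.coeFn_smul]
  show shiftFun (lp.single 2 j (1:ℂ)) k = _
  cases k with
  | zero =>
      have : (lp.single 2 (j+1) (1:ℂ) : ℕ → ℂ) 0 = 0 := lp.single_apply_ne 2 _ _ (by omega)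
      simp [shiftFun, Pi.smul_apply, this]
  | succ k =>
      show wwt k * (lp.single 2 j (1:ℂ) : ℕ → ℂ) k = wwt j • (lp.single 2 (j+1) (1:ℂ) : ℕ → ℂ) (k+1)
      rcases eq_or_ne k j with rfl | hkj
      · rw [lp.single_apply_self, lp.single_apply_self]; simp
      · rw [lp.single_apply_ne 2 _ _ hkj, lp.single_apply_ne 2 _ _ (by omega : k+1 ≠ j+1)]
        simp
/-- `F N` = number of 1-based indices in blocks `2, …, N`, i.e. `N(N+1)/2 - 1`. -/
def Fb (N : ℕ) : ℕ := N * (N + 1) / 2 - 1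

/-- product of the first `n` weights. -/
def Pw (n : ℕ) : ℝ := ∏ i ∈ Finset.range n, rwt i

lemma tri_ge_one {N : ℕ} (hN : 1 ≤ N) : 1 ≤ N * (N + 1) / 2 := by
  have h : 2 ≤ N * (N + 1) := by nlinarith
  omega

lemma tri_succ (N : ℕ) : (N + 1) * (N + 2) / 2 = N * (N + 1) / 2 + (N + 1) := by
  have h : (N + 1) * (N + 2) = N * (N + 1) + (N + 1) * 2 := by ring
  rw [h, Nat.add_mul_div_right _ _ (by norm_num : (0:ℕ) < 2)]

lemma Fb_succ {N : ℕ} (hN : 1 ≤ N) : Fb (N + 1) = Fb N + (N + 1) := by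
  have h1 := tri_ge_one hN
  have h2 := tri_succ N
  have h3 : (N + 1) * (N + 1 + 1) = (N + 1) * (N + 2) := by ring
  unfold Fb
  rw [h3]
  omega

lemma rwt_block {N i : ℕ} (hN : 1 ≤ N) (h1 : Fb N ≤ i) (h2 : i < Fb N + (N + 1)) :
    rwt i = if Odd (N + 1) then (2:ℝ) else 1 / 2 := by
  have ht := tri_ge_one hN
  have h2' := tri_succ N
  have hb : blockOf (i + 1) = N + 1 := by
    apply blockOf_eq (by omega)
    · show (N + 1) * (N + 1 - 1) / 2 ≤ i + 1
      have he : (N + 1) * (N + 1 - 1) = N * (N + 1) := by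
        rw [Nat.add_sub_cancel, Nat.mul_comm]
      rw [he]
      unfold Fb at h1
      omega
    · show i + 1 < (N + 1) * (N + 1 + 1) / 2
      have he : (N + 1) * (N + 1 + 1) = (N + 1) * (N + 2) := by ring
      rw [he]
      unfold Fb at h2
      omega
  rw [rwt, hb]

lemma Pw_step {N : ℕ} (hN : 1 ≤ N) :
    Pw (Fb (N + 1)) = Pw (Fb N) * (if Odd (N + 1) then (2:ℝ) else 1 / 2) ^ (N + 1) := by
  rw [Fb_succ hN, Pw, Finset.prod_range_add, ← Pw]
  congr 1
  have hc : ∀ i ∈ Finset.range (N + 1),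
      rwt (Fb N + i) = (if Odd (N + 1) then (2:ℝ) else 1 / 2) := by
    intro i hi
    rw [Finset.mem_range] at hi
    exact rwt_block hN (Nat.le_add_right _ _) (by omega)
  rw [Finset.prod_congr rfl hc, Finset.prod_const, Finset.card_range]

lemma Pw_vals (m : ℕ) :
    Pw (Fb (2 * m + 1)) = 2 ^ m ∧ Pw (Fb (2 * m + 2)) = (1 / 2 : ℝ) ^ (m + 2) := by
  induction m with
  | zero =>
      have hF1 : Fb 1 = 0 := by unfold Fb; norm_num
      have hP1 : Pw (Fb 1) = 1 := by rw [hF1]; simp [Pw]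
      constructor
      · simpa using hP1
      · have := Pw_step (N := 1) le_rfl
        rw [show (1:ℕ)+1 = 2 from rfl] at this
        simp only [show ¬ Odd 2 by decide, if_neg] at this
        simpa [hP1] using this
  | succ m ih =>
      obtain ⟨ih1, ih2⟩ := ih
      have hodd : Odd (2 * m + 2 + 1) := ⟨m + 1, by ring⟩
      have heven : ¬ Odd (2 * m + 3 + 1) := by simp [Nat.odd_iff]; omega
      have s1 := Pw_step (N := 2 * m + 2) (by omega)
      rw [if_pos hodd] at s1
      have e1 : Pw (Fb (2 * (m + 1) + 1)) = 2 ^ (m + 1) := by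
        have : 2 * (m + 1) + 1 = 2 * m + 2 + 1 := by ring
        rw [this, s1, ih2]
        calc (1 / 2 : ℝ) ^ (m + 2) * 2 ^ (2 * m + 2 + 1)
            = (1 / 2 : ℝ) ^ (m + 2) * (2 ^ (m + 2) * 2 ^ (m + 1)) := by
              rw [show 2 * m + 2 + 1 = (m + 2) + (m + 1) from by omega]; ring
          _ = ((1 / 2 : ℝ) * 2) ^ (m + 2) * 2 ^ (m + 1) := by rw [mul_pow]; ring
          _ = 2 ^ (m + 1) := by norm_num
      refine ⟨e1, ?_⟩
      have s2 := Pw_step (N := 2 * m + 3) (by omega)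
      rw [if_neg heven] at s2
      have h34 : 2 * (m + 1) + 2 = 2 * m + 3 + 1 := by ring
      rw [h34, s2, show 2 * m + 3 = 2 * (m + 1) + 1 from by ring, e1]
      calc (2:ℝ) ^ (m + 1) * (1 / 2) ^ (2 * m + 3 + 1)
          = (2:ℝ) ^ (m + 1) * ((1 / 2) ^ (m + 1) * (1 / 2) ^ (m + 3)) := by
            rw [show 2 * m + 3 + 1 = (m + 1) + (m + 3) from by omega]; ring
        _ = ((2:ℝ) * (1 / 2)) ^ (m + 1) * (1 / 2) ^ (m + 3) := by rw [mul_pow]; ring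
        _ = (1 / 2 : ℝ) ^ (m + 1 + 2) := by norm_num


end StmtAux

open Filter Finset Topology

/-- There is a bounded operator `T` acting as a weighted shift on an orthonormal basis,
multiplying by `2` on blocks `I_N` with `N` odd and by `1/2` on blocks with `N` even
(where `I_N = {N(N-1)/2, …, N(N+1)/2 - 1}`, indices `1`-based, here shifted so that the
Lean index `j` corresponds to `k = j + 1`), such that the orbit `{T^n e_1}` has a
subsequence of norms tending to `∞` and a subsequence of norms tending to `0`; in
particular it is neither a Bessel sequence nor satisfies the lower frame condition. -/
theorem stmt_19 {H : Type*} [NormedAddCommGroup H] [InnerProductSpace ℂ H]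
    [CompleteSpace H]
    (b : HilbertBasis ℕ ℂ H) :
    ∃ T : H →L[ℂ] H,
      (∀ j N : ℕ, 2 ≤ N → N * (N - 1) / 2 ≤ j + 1 → j + 1 < N * (N + 1) / 2 →
        T (b j) = (if Odd N then (2 : ℂ) else (1 / 2 : ℂ)) • b (j + 1)) ∧
      (∀ M : ℝ, ∃ n : ℕ, M < ‖(T ^ n) (b 0)‖) ∧
      (∀ ε : ℝ, 0 < ε → ∃ n : ℕ, ‖(T ^ n) (b 0)‖ < ε) := by
  classical
  set T : H →L[ℂ] H :=
    ((b.repr.symm.toContinuousLinearEquiv :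
        lp (fun _ : ℕ => ℂ) 2 ≃L[ℂ] H) : lp (fun _ : ℕ => ℂ) 2 →L[ℂ] H).comp
      (Tlp.comp ((b.repr.toContinuousLinearEquiv :
        H ≃L[ℂ] lp (fun _ : ℕ => ℂ) 2) : H →L[ℂ] lp (fun _ : ℕ => ℂ) 2)) with hTdef
  have hT : ∀ j : ℕ, T (b j) = wwt j • b (j + 1) := by
    intro j
    have : T (b j) = b.repr.symm (Tlp (b.repr (b j))) := by
      simp [hTdef, ContinuousLinearMap.comp_apply,
        LinearIsometryEquiv.coe_toContinuousLinearEquiv]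
    rw [this, b.repr_self, Tlp_single, map_smul, b.repr_symm_single]
  have horbit : ∀ n : ℕ, (T ^ n) (b 0) = (∏ i ∈ Finset.range n, wwt i) • b n := by
    intro n
    induction n with
    | zero => simp
    | succ n ih =>
        rw [pow_succ', ContinuousLinearMap.mul_apply, ih, map_smul, hT,
          Finset.prod_range_succ, smul_smul, mul_comm]
  have hnorm : ∀ n : ℕ, ‖(T ^ n) (b 0)‖ = Pw n := by
    intro n
    rw [horbit n, norm_smul, b.orthonormal.1 n, mul_one]
    rw [show (∏ i ∈ Finset.range n, wwt i) = ((Pw n : ℝ) : ℂ) by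
      rw [Pw]; push_cast [wwt]; rfl]
    rw [Complex.norm_real, Real.norm_eq_abs, abs_of_pos]
    exact Finset.prod_pos fun i _ => rwt_pos i
  refine ⟨T, ?_, ?_, ?_⟩
  · intro j N hN hlow hhigh
    rw [hT j]
    congr 1
    have hb : blockOf (j + 1) = N := blockOf_eq (by omega) hlow hhigh
    rw [wwt, rwt, hb]
    split <;> norm_num
  · intro M
    obtain ⟨m, hm⟩ := pow_unbounded_of_one_lt M (one_lt_two (α := ℝ))
    refine ⟨Fb (2 * m + 1), ?_⟩
    rw [hnorm, (Pw_vals m).1]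
    exact hm
  · intro ε hε
    obtain ⟨m, hm⟩ := exists_pow_lt_of_lt_one hε (by norm_num : (1 / 2 : ℝ) < 1)
    refine ⟨Fb (2 * m + 2), ?_⟩
    rw [hnorm, (Pw_vals m).2]
    calc (1 / 2 : ℝ) ^ (m + 2) ≤ (1 / 2 : ℝ) ^ m :=
          pow_le_pow_of_le_one (by norm_num) (by norm_num) (by omega)
      _ < ε := hm
end
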